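/- arXiv:1206.1126 — 2 statements merged into one kernel-verified Lean document; each statement's English description precedes it below -/
import Mathlib

section
/- Let p be an odd prime, k a positive even integer, and y₁, ..., y_k ∈ ℤ. Suppose the composite map R_{y_k} ∘ ⋯ ∘ R_{y_1} induced on ZMod p (where R_c(z) = 2c - z) is the identity. Define for integers s, t: f(s,t) = Σ_{j=1}^{k} (s_j - t_j) * ((2y_j - t_j)^p + t_j^p - 2y_j^p)/p computed with integer lifts, where s_j, t_j are the images of s, t under R_{y_{j-1}} ∘ ⋯ ∘ R_{y_1}. Then in ZMod p, f(s,t) = K * (s - t) where K = -(2/p) * (y₁^p - y₂^p + y₃^p - ⋯ - y_k^p) reduced mod p. -/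
private lemma foldl_cast_aux (p : ℕ) (l : List ℤ) (z : ℤ) :
    ((l.foldl (fun z c => 2 * c - z) z : ℤ) : ZMod p)
      = (l.map (fun c : ℤ => (c : ZMod p))).foldl (fun w c => 2 * c - w) (z : ZMod p) := by
  induction l generalizing z with
  | nil => simp
  | cons c l ih =>
      simp only [List.foldl_cons, List.map_cons, ih]
      congr 1
      push_cast
      ring

theorem cocycle_f_eq_K (p : ℕ) (hp : p.Prime) (hodd : Odd p)
    (k : ℕ) (hk : 0 < k) (hkeven : Even k) (y : Fin k → ℤ)
    (hid : ∀ z : ZMod p,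
      (List.ofFn fun j => ((y j : ℤ) : ZMod p)).foldl (fun w c => 2 * c - w) z = z)
    (S : ℤ → ℕ → ℤ)
    (hS : ∀ s : ℤ, ∀ j : ℕ,
      S s j = ((List.ofFn y).take j).foldl (fun z c => 2 * c - z) s)
    (s t : ℤ) (f K : ℤ)
    (hf : f = ∑ j : Fin k,
      (S s (j : ℕ) - S t (j : ℕ)) *
        (((2 * y j - S t (j : ℕ)) ^ p + (S t (j : ℕ)) ^ p - 2 * (y j) ^ p) / (p : ℤ)))
    (hK : K = (-2 * (∑ j : Fin k, (-1 : ℤ) ^ (j : ℕ) * (y j) ^ p)) / (p : ℤ)) :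
    ((f : ℤ) : ZMod p) = ((K : ℤ) : ZMod p) * (((s : ℤ) : ZMod p) - ((t : ℤ) : ZMod p)) := by
  haveI : Fact p.Prime := ⟨hp⟩
  -- step lemma
  have hstep : ∀ (z : ℤ) (j : ℕ) (hj : j < k), S z (j + 1) = 2 * y ⟨j, hj⟩ - S z j := by
    intro z j hj
    rw [hS, hS, List.take_succ]
    have hget : (List.ofFn y)[j]? = some (y ⟨j, hj⟩) := by
      rw [List.getElem?_eq_getElem (by simpa using hj)]
      simp
    rw [hget]
    simp [List.foldl_append]
  have hS0 : ∀ z : ℤ, S z 0 = z := by intro z; rw [hS]; simp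
  -- sign lemma
  have hsign : ∀ j : ℕ, j ≤ k → S s j - S t j = (-1 : ℤ) ^ j * (s - t) := by
    intro j
    induction j with
    | zero => intro _; simp [hS0]
    | succ j ih =>
        intro hj
        have hj' : j < k := hj
        rw [hstep s j hj', hstep t j hj']
        linear_combination -(ih hj'.le)
  -- S t k ≡ t mod p
  have htk : ((S t k : ℤ) : ZMod p) = (t : ZMod p) := by
    rw [hS]
    rw [show (List.ofFn y).take k = List.ofFn y by
      simp [List.take_of_length_le]]
    rw [foldl_cast_aux]
    rw [show (List.ofFn y).map (fun c : ℤ => (c : ZMod p))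
        = List.ofFn fun j => ((y j : ℤ) : ZMod p) by
      rw [List.map_ofFn]; rfl]
    exact hid _
  -- divisibility of numerators
  have hNdvd : ∀ j : Fin k,
      (p : ℤ) ∣ ((2 * y j - S t (j : ℕ)) ^ p + (S t (j : ℕ)) ^ p - 2 * (y j) ^ p) := by
    intro j
    rw [← ZMod.intCast_zmod_eq_zero_iff_dvd]
    push_cast
    rw [ZMod.pow_card, ZMod.pow_card, ZMod.pow_card]
    ring
  -- telescoping identity
  set b : ℕ → ℤ := fun n => (-1 : ℤ) ^ n * (S t n) ^ p with hb
  have key : ∀ j : Fin k,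
      (-1 : ℤ) ^ (j : ℕ) *
        ((2 * y j - S t (j : ℕ)) ^ p + (S t (j : ℕ)) ^ p - 2 * (y j) ^ p)
      = (b (j : ℕ) - b ((j : ℕ) + 1)) - (-1 : ℤ) ^ (j : ℕ) * (2 * (y j) ^ p) := by
    intro j
    have h2 : 2 * y j - S t (j : ℕ) = S t ((j : ℕ) + 1) := by
      rw [hstep t (j : ℕ) j.isLt]
    rw [h2, hb]
    ring
  have htel : ∑ j : Fin k, (-1 : ℤ) ^ (j : ℕ) *
        ((2 * y j - S t (j : ℕ)) ^ p + (S t (j : ℕ)) ^ p - 2 * (y j) ^ p)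
      = (t ^ p - (S t k) ^ p) - 2 * ∑ j : Fin k, (-1 : ℤ) ^ (j : ℕ) * (y j) ^ p := by
    rw [Finset.sum_congr rfl fun j _ => key j, Finset.sum_sub_distrib]
    have htele : ∑ j : Fin k, (b (j : ℕ) - b ((j : ℕ) + 1)) = b 0 - b k := by
      rw [Fin.sum_univ_eq_sum_range (fun n => b n - b (n + 1)), Finset.sum_range_sub' b]
    have h2s : ∑ j : Fin k, (-1 : ℤ) ^ (j : ℕ) * (2 * (y j) ^ p)
        = 2 * ∑ j : Fin k, (-1 : ℤ) ^ (j : ℕ) * (y j) ^ p := by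
      rw [Finset.mul_sum]
      exact Finset.sum_congr rfl fun j _ => by ring
    rw [htele, h2s, hb]
    simp only [pow_zero, one_mul, hS0, hkeven.neg_one_pow]
  -- p^2 divides t^p - (S t k)^p
  have hD : (p : ℤ) ^ 2 ∣ t ^ p - (S t k) ^ p := by
    have hmod : ((t - S t k : ℤ) : ZMod p) = 0 := by push_cast; rw [htk]; ring
    have hdv : (p : ℤ) ∣ t - S t k := (ZMod.intCast_zmod_eq_zero_iff_dvd _ p).mp hmod
    have h := dvd_sub_pow_of_dvd_sub hdv 1
    simpa using h
  -- divisibility of K's numerator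
  have hWd : (p : ℤ) ∣ -2 * ∑ j : Fin k, (-1 : ℤ) ^ (j : ℕ) * (y j) ^ p := by
    have h1 : (p : ℤ) ∣ ∑ j : Fin k, (-1 : ℤ) ^ (j : ℕ) *
        ((2 * y j - S t (j : ℕ)) ^ p + (S t (j : ℕ)) ^ p - 2 * (y j) ^ p) :=
      Finset.dvd_sum fun j _ => (hNdvd j).mul_left _
    have h2 : (p : ℤ) ∣ t ^ p - (S t k) ^ p :=
      dvd_trans (dvd_pow_self _ two_ne_zero) hD
    have heq : -2 * ∑ j : Fin k, (-1 : ℤ) ^ (j : ℕ) * (y j) ^ p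
        = (∑ j : Fin k, (-1 : ℤ) ^ (j : ℕ) *
            ((2 * y j - S t (j : ℕ)) ^ p + (S t (j : ℕ)) ^ p - 2 * (y j) ^ p))
          - (t ^ p - (S t k) ^ p) := by
      rw [htel]; ring
    rw [heq]
    exact dvd_sub h1 h2
  have hKp : K * (p : ℤ) = -2 * ∑ j : Fin k, (-1 : ℤ) ^ (j : ℕ) * (y j) ^ p := by
    rw [hK]; exact Int.ediv_mul_cancel hWd
  -- main computation
  have hfp : f * (p : ℤ) = ∑ j : Fin k, (S s (j : ℕ) - S t (j : ℕ)) *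
      ((2 * y j - S t (j : ℕ)) ^ p + (S t (j : ℕ)) ^ p - 2 * (y j) ^ p) := by
    rw [hf, Finset.sum_mul]
    refine Finset.sum_congr rfl fun j _ => ?_
    rw [mul_assoc, Int.ediv_mul_cancel (hNdvd j)]
  have hfp2 : f * (p : ℤ) = (s - t) * ∑ j : Fin k, (-1 : ℤ) ^ (j : ℕ) *
      ((2 * y j - S t (j : ℕ)) ^ p + (S t (j : ℕ)) ^ p - 2 * (y j) ^ p) := by
    rw [hfp, Finset.mul_sum]
    refine Finset.sum_congr rfl fun j _ => ?_
    rw [hsign (j : ℕ) j.isLt.le]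
    ring
  obtain ⟨m, hm⟩ := hD
  have hfp3 : f * (p : ℤ) = ((s - t) * ((p : ℤ) * m + K)) * (p : ℤ) := by
    rw [hfp2, htel, hm]
    linear_combination (t - s) * hKp
  have hp0 : (p : ℤ) ≠ 0 := Int.natCast_ne_zero.mpr hp.pos.ne'
  have hf2 : f = (s - t) * ((p : ℤ) * m + K) := mul_right_cancel₀ hp0 hfp3
  rw [hf2]
  push_cast
  rw [ZMod.natCast_self]
  ring
end

section
/- Let p be an odd prime, k' and l' nonnegative integers, and ν₁, ..., ν_{k'+l'} nonzero elements of ZMod p. Let A be a k' × l' matrix over ZMod p and define for each j = 1,...,l' the column vector a_j ∈ (ZMod p)^{k'} with entries (a_j)_i = sqrtν_i * A_{ij}, where sqrtν_i² = ν_i. Suppose that for all (y_{k'+1},...,y_{k'+l'}) ∈ (ZMod p)^{l'}, setting (y₁,...,y_{k'}) = A·(y_{k'+1},...,y_{k'+l'}), we have Σ_{i=1}^{k'+l'} ν_i y_i² = 0. Then ‖a_j‖² + ν_{k'+j} = 0 for each j, and (a_j, a_{j'}) = 0 for all j ≠ j'; in particular the a_j are nonzero pairwise orthogonal vectors, so l'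 ≤ k'. -/
theorem pseudo_ribbon_orthogonality (p : ℕ) (hp : p.Prime) (hodd : Odd p)
    (k' l' : ℕ) (ν : Fin (k' + l') → ZMod p) (hν : ∀ i, ν i ≠ 0)
    (sqrtν : Fin k' → ZMod p) (hsqrt : ∀ i, (sqrtν i) ^ 2 = ν (Fin.castAdd l' i))
    (A : Matrix (Fin k') (Fin l') (ZMod p))
    (a : Fin l' → (Fin k' → ZMod p)) (ha : ∀ j i, a j i = sqrtν i * A i j)
    (hzero : ∀ w : Fin l' → ZMod p,
      (∑ i : Fin k', ν (Fin.castAdd l' i) * (∑ j : Fin l', A i j * w j) ^ 2) +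
        (∑ j : Fin l', ν (Fin.natAdd k' j) * (w j) ^ 2) = 0) :
    (∀ j : Fin l', (∑ i : Fin k', (a j i) ^ 2) + ν (Fin.natAdd k' j) = 0) ∧
    (∀ j j' : Fin l', j ≠ j' → (∑ i : Fin k', a j i * a j' i) = 0) ∧
    (∀ j : Fin l', a j ≠ 0) ∧
    l' ≤ k' := by
  haveI : Fact p.Prime := ⟨hp⟩
  have h2 : (2 : ZMod p) ≠ 0 := by
    intro h
    have hdvd : p ∣ 2 := by
      have := (ZMod.natCast_eq_zero_iff 2 p).mp (by exact_mod_cast h)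
      exact this
    have hp2 : p = 2 := (Nat.prime_dvd_prime_iff_eq hp Nat.prime_two).mp hdvd
    subst hp2
    simp [Nat.odd_iff] at hodd
  set S : Fin l' → Fin l' → ZMod p :=
    fun j j' => ∑ i, ν (Fin.castAdd l' i) * (A i j * A i j') with hS
  have hinner : ∀ j j', (∑ i : Fin k', a j i * a j' i) = S j j' := by
    intro j j'
    refine Finset.sum_congr rfl fun i _ => ?_
    rw [ha, ha, ← hsqrt i]; ring
  have hdiag : ∀ j, S j j + ν (Fin.natAdd k' j) = 0 := by
    intro j
    have := hzero (fun j'' => if j = j'' then 1 else 0)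
    simpa [mul_ite, Finset.mul_sum, Finset.sum_ite_eq, sq, hS] using this
  have hoff : ∀ j j', j ≠ j' → S j j' = 0 := by
    intro j j' hjj
    have h := hzero (fun j'' => (if j = j'' then 1 else 0) + (if j' = j'' then 1 else 0))
    have e1 : ∀ i, (∑ j'' : Fin l',
        A i j'' * ((if j = j'' then 1 else 0) + (if j' = j'' then 1 else 0))) =
        A i j + A i j' := by
      intro i
      simp [mul_add, mul_ite, Finset.sum_add_distrib, Finset.sum_ite_eq]
    have e2 : (∑ j'' : Fin l', ν (Fin.natAdd k' j'') *
        ((if j = j'' then (1:ZMod p) else 0) + (if j' = j'' then 1 else 0))^2)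
        = ν (Fin.natAdd k' j) + ν (Fin.natAdd k' j') := by
      have key : ∀ j'' : Fin l', ν (Fin.natAdd k' j'') *
          ((if j = j'' then (1:ZMod p) else 0) + (if j' = j'' then 1 else 0))^2
          = (if j = j'' then ν (Fin.natAdd k' j'') else 0)
            + (if j' = j'' then ν (Fin.natAdd k' j'') else 0) := by
        intro j''
        by_cases h1 : j = j'' <;> by_cases h2 : j' = j''
        · exact absurd (h1.trans h2.symm) hjj
        · simp [h1, h2]
        · simp [h1, h2]
        · simp [h1, h2]
      rw [Finset.sum_congr rfl fun x _ => key x, Finset.sum_add_distrib]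
      simp [Finset.sum_ite_eq]
    rw [Finset.sum_congr rfl (fun i _ => by rw [e1 i]), e2] at h
    have expand : (∑ i : Fin k', ν (Fin.castAdd l' i) * (A i j + A i j') ^ 2)
        = S j j + 2 * S j j' + S j' j' := by
      simp only [hS, Finset.mul_sum, ← Finset.sum_add_distrib]
      refine Finset.sum_congr rfl fun i _ => by ring
    rw [expand] at h
    have hj := hdiag j
    have hj' := hdiag j'
    have h0 : 2 * S j j' = 0 := by linear_combination h - hj - hj'
    rcases mul_eq_zero.mp h0 with h' | h'
    · exact absurd h' h2
    · exact h'
  have hdiag' : ∀ j, (∑ i : Fin k', (a j i) ^ 2) + ν (Fin.natAdd k' j) = 0 := by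
    intro j
    have e : (∑ i : Fin k', (a j i) ^ 2) = S j j := by
      rw [← hinner]
      exact Finset.sum_congr rfl fun i _ => sq (a j i)
    rw [e]; exact hdiag j
  have hne : ∀ j, a j ≠ 0 := by
    intro j h0
    have := hdiag' j
    rw [h0] at this
    simp at this
    exact hν _ this
  refine ⟨hdiag', fun j j' h => by rw [hinner]; exact hoff j j' h, hne, ?_⟩
  have hli : LinearIndependent (ZMod p) a := by
    rw [Fintype.linearIndependent_iff]
    intro g hg j
    have hdot : ∑ j' : Fin l', g j' * (∑ i, a j' i * a j i) = 0 := by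
      have happ : ∀ i, (∑ j' : Fin l', g j' • a j') i = 0 := fun i => by rw [hg]; rfl
      calc ∑ j' : Fin l', g j' * (∑ i, a j' i * a j i)
          = ∑ j' : Fin l', ∑ i : Fin k', g j' * a j' i * a j i := by
            refine Finset.sum_congr rfl fun j' _ => ?_
            rw [Finset.mul_sum]
            exact Finset.sum_congr rfl fun i _ => by ring
        _ = ∑ i : Fin k', ∑ j' : Fin l', g j' * a j' i * a j i := Finset.sum_comm
        _ = ∑ i : Fin k', (∑ j' : Fin l', g j' * a j' i) * a j i := by
            refine Finset.sum_congr rfl fun i _ => ?_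
            rw [Finset.sum_mul]
        _ = 0 := by
            refine Finset.sum_eq_zero fun i _ => ?_
            have := happ i
            simp only [Finset.sum_apply, Pi.smul_apply, smul_eq_mul] at this
            rw [this, zero_mul]
    have hsum : ∑ j' : Fin l', g j' * (∑ i, a j' i * a j i)
        = g j * (∑ i, a j i * a j i) := by
      refine Finset.sum_eq_single j (fun j' _ hne' => ?_) (by simp)
      rw [hinner, hoff j' j hne', mul_zero]
    rw [hsum] at hdot
    have hne0 : (∑ i, a j i * a j i) ≠ 0 := by
      have e : (∑ i, a j i * a j i) = ∑ i, (a j i)^2 :=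
        Finset.sum_congr rfl fun i _ => (sq (a j i)).symm
      rw [e]
      intro h0
      have := hdiag' j
      rw [h0, zero_add] at this
      exact hν _ this
    rcases mul_eq_zero.mp hdot with h' | h'
    · exact h'
    · exact absurd h' hne0
  have := hli.fintype_card_le_finrank
  simpa using this
end
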